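/- Let W : ℕ → ℕ satisfy W(0)=1, W(1)=2, and W(N+1)=2·W(N)+N·W(N-1). Then W(N) = ∑_{k=0}^{⌊N/2⌋} (N choose 2k) · (2k-1)!! · 2^(N-2k), where (2k-1)!! = (2k)!/(2^k · k!) is the number of perfect matchings on 2k elements. -/

import Mathlib

/-!
`(2k)! / (2^k k!) = (2k-1)‼` is the number of perfect matchings of `2k` coins, so the sum counts
the configurations of `N` coins (each up, down, or paired with another) by their number `k` of
pairs. The recursion is checked termwise: by Pascal's rule
`C(N+2, 2k+2) = C(N+1, 2k+1) + C(N+1, 2k+2)` the `(k+1)`-st term for `N + 2` is `N + 1` times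
the `k`-th term for `N` plus `2` times the `(k+1)`-st term for `N + 1`.
-/

open Finset Nat

theorem Nat.factorial_eq_doubleFactorial_mul (n : ℕ) : n ! = n‼ * (n - 1)‼ := by
  cases n with
  | zero => rfl
  | succ n => exact factorial_eq_mul_doubleFactorial n

theorem Nat.factorial_two_mul_div (k : ℕ) : (2 * k)! / (2 ^ k * k !) = (2 * k - 1)‼ := by
  rw [factorial_eq_doubleFactorial_mul, doubleFactorial_two_mul,
    Nat.mul_div_cancel_left _ (by positivity)]

theorem Nat.cast_choose_mul_pow_add_one_sub {R : Type*} [CommSemiring R] (x : R) (n j : ℕ) :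
    (n.choose j : R) * x ^ (n + 1 - j) = x * ((n.choose j : R) * x ^ (n - j)) := by
  rcases le_or_gt j n with hjn | hnj
  · rw [Nat.sub_add_comm hjn, pow_succ]
    ring
  · simp [choose_eq_zero_of_lt hnj]

section InvolutionPoly

variable {R : Type*} [CommSemiring R]

/-- Involutions of `Fin n` counted with weight `x` per fixed point. -/
def involutionPoly (x : R) (n : ℕ) : R :=
  ∑ k ∈ range (n / 2 + 1), (n.choose (2 * k) : R) * (2 * k - 1)‼ * x ^ (n - 2 * k)

theorem involutionPoly_eq_sum_range_of_lt (x : R) {n M : ℕ} (hM : n / 2 < M) :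
    involutionPoly x n =
      ∑ k ∈ range M, (n.choose (2 * k) : R) * (2 * k - 1)‼ * x ^ (n - 2 * k) := by
  refine sum_subset (range_subset_range.2 hM) fun k hkM hk => ?_
  rw [mem_range] at hkM hk
  simp [choose_eq_zero_of_lt (show n < 2 * k by omega)]

@[simp]
theorem involutionPoly_zero (x : R) : involutionPoly x 0 = 1 := by
  simp [involutionPoly]

@[simp]
theorem involutionPoly_one (x : R) : involutionPoly x 1 = x := by
  simp [involutionPoly]

theorem involutionPoly_term_add_two (x : R) (m k : ℕ) :
    ((m + 2).choose (2 * (k + 1)) : R) * (2 * (k + 1) - 1)‼ * x ^ (m + 2 - 2 * (k + 1)) =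
      x * (((m + 1).choose (2 * (k + 1)) : R) * (2 * (k + 1) - 1)‼ *
          x ^ (m + 1 - 2 * (k + 1))) +
        (m + 1) * ((m.choose (2 * k) : R) * (2 * k - 1)‼ * x ^ (m - 2 * k)) := by
  have hidx : 2 * (k + 1) = 2 * k + 1 + 1 := by ring
  have hexp : m + 2 - (2 * k + 1 + 1) = m - 2 * k := by omega
  have habsorb : (m + 1 : R) * m.choose (2 * k) * (2 * k - 1)‼ =
      (m + 1).choose (2 * k + 1) * (2 * k + 1)‼ := by
    rw [doubleFactorial_add_one, Nat.cast_mul, ← mul_assoc]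
    exact_mod_cast
      congrArg (fun n : ℕ => (n * (2 * k - 1)‼ : R)) (add_one_mul_choose_eq m (2 * k))
  rw [hidx, hexp, Nat.add_sub_cancel, choose_succ_succ', cast_add]
  calc _ = (m + 1 : R) * m.choose (2 * k) * (2 * k - 1)‼ * x ^ (m - 2 * k) +
        ((m + 1).choose (2 * k + 1 + 1) * x ^ (m + 1 + 1 - (2 * k + 1 + 1))) * (2 * k + 1)‼ := by
        rw [habsorb, ← hexp]
        ring
    _ = _ := by
        rw [cast_choose_mul_pow_add_one_sub]
        ring

theorem involutionPoly_add_two (x : R) (m : ℕ) :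
    involutionPoly x (m + 2) = x * involutionPoly x (m + 1) + (m + 1) * involutionPoly x m := by
  rw [involutionPoly_eq_sum_range_of_lt x (M := m / 2 + 1 + 1) (by omega),
    involutionPoly_eq_sum_range_of_lt x (n := m + 1) (M := m / 2 + 1 + 1) (by omega),
    involutionPoly, sum_range_succ' _ (m / 2 + 1), sum_range_succ' _ (m / 2 + 1), mul_add,
    mul_sum, mul_sum, add_right_comm, ← sum_add_distrib]
  congr 1
  · exact sum_congr rfl fun k _ => involutionPoly_term_add_two x m k
  · simp [pow_succ, mul_comm]

end InvolutionPoly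

theorem magnetic_coin_closed_form (W : ℕ → ℕ)
    (h0 : W 0 = 1) (h1 : W 1 = 2)
    (hrec : ∀ N : ℕ, 1 ≤ N → W (N + 1) = 2 * W N + N * W (N - 1)) :
    ∀ N : ℕ, W N = ∑ k ∈ Finset.range (N / 2 + 1),
      Nat.choose N (2 * k) * ((2 * k).factorial / (2 ^ k * k.factorial)) * 2 ^ (N - 2 * k) := by
  have hW : ∀ N, W N = involutionPoly 2 N := by
    intro N
    induction N using Nat.twoStepInduction with
    | zero => simp [h0]
    | one => simp [h1]
    | more m hm hm1 =>
      rw [hrec (m + 1) (by omega), Nat.add_sub_cancel, hm, hm1, involutionPoly_add_two,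
        Nat.cast_id]
  intro N
  simp only [hW, involutionPoly, Nat.cast_id, Nat.factorial_two_mul_div]
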